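/- Let P > 0 and A, B ∈ ℝ with (A,B) ≠ (0,0), and define ψ : {ζ ∈ ℂ : Re ζ > 0} → ℂ by ψ(ζ) = Aζ − B(ζ² + P²)^{1/2}, where (·)^{1/2} is the principal square root. Then |ψ| is uniformly bounded away from zero on {Re ζ > 0} (i.e. there exists δ > 0 with |ψ(ζ)| ≥ δ for all ζ with Re ζ > 0) if and only if A·B < 0. -/

import Mathlib

open Complex

lemma sqrt_sq' (z : ℂ) : (z ^ ((1:ℂ)/2)) ^ 2 = z := by
  rcases eq_or_ne z 0 with rfl | hz
  · rw [Complex.zero_cpow (by norm_num)]; ring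
  · have h := Complex.cpow_nat_inv_pow z (n := 2) (by norm_num)
    norm_num at h ⊢
    exact h

lemma sqrt_re_nonneg' (z : ℂ) : 0 ≤ (z ^ ((1:ℂ)/2)).re := by
  rcases eq_or_ne z 0 with rfl | hz
  · rw [Complex.zero_cpow (by norm_num)]; simp
  · rw [Complex.cpow_def_of_ne_zero hz, Complex.exp_re]
    have him : (Complex.log z * ((1:ℂ)/2)).im = z.arg / 2 := by
      simp [Complex.mul_im, Complex.log_im, Complex.log_re]
      ring
    rw [him]
    have h1 := Complex.neg_pi_lt_arg z
    have h2 := Complex.arg_le_pi z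
    have hpi := Real.pi_pos
    have hcos : 0 ≤ Real.cos (z.arg / 2) := by
      apply Real.cos_nonneg_of_mem_Icc
      constructor <;> [linarith; linarith]
    positivity

lemma sqrt_facts (z : ℂ) (h : z.im ≠ 0 ∨ 0 < z.re) :
    0 < (z ^ ((1:ℂ)/2)).re ∧
      z.re = (z ^ ((1:ℂ)/2)).re ^ 2 - (z ^ ((1:ℂ)/2)).im ^ 2 ∧
      z.im = 2 * (z ^ ((1:ℂ)/2)).re * (z ^ ((1:ℂ)/2)).im := by
  set w := z ^ ((1:ℂ)/2) with hw
  have hw2 : w ^ 2 = z := sqrt_sq' z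
  have hre : z.re = w.re ^ 2 - w.im ^ 2 := by
    rw [← hw2]; simp [pow_two, Complex.mul_re]
  have him : z.im = 2 * w.re * w.im := by
    rw [← hw2]; simp [pow_two, Complex.mul_im]; ring
  have hnn : 0 ≤ w.re := sqrt_re_nonneg' z
  have hne : w.re ≠ 0 := by
    intro h0
    rcases h with h | h
    · apply h; rw [him, h0]; ring
    · rw [hre, h0] at h; nlinarith
  exact ⟨lt_of_le_of_ne hnn (Ne.symm hne), hre, him⟩

set_option maxHeartbeats 1000000 in
lemma psi_lower (P a b : ℝ) (hP : 0 < P) (ha : 0 < a) (hb : 0 < b) (ζ : ℂ) (hζ : 0 < ζ.re) :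
    min a b * (P/2) ≤ ‖((a:ℂ)*ζ + (b:ℂ)*((ζ^2+(P:ℂ)^2) ^ ((1:ℂ)/2)))‖ := by
  set u := ζ^2 + (P:ℂ)^2 with hu
  set w := u ^ ((1:ℂ)/2) with hwdef
  set x := ζ.re with hx
  set y := ζ.im with hy
  have hure : u.re = x^2 - y^2 + P^2 := by
    simp [hu, pow_two, Complex.mul_re, hx, hy]
  have huim : u.im = 2*x*y := by
    simp [hu, pow_two, Complex.mul_im]; ring
  have hcond : u.im ≠ 0 ∨ 0 < u.re := by
    rcases eq_or_ne y 0 with hy0 | hy0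
    · right; rw [hure, hy0]; nlinarith
    · left; rw [huim]; positivity
  obtain ⟨hwre, hzre, hzim⟩ := sqrt_facts u hcond
  rw [← hwdef] at hwre hzre hzim
  rw [hure] at hzre; rw [huim] at hzim
  set ψ := (a:ℂ)*ζ + (b:ℂ)*w with hψ
  have hψre : ψ.re = a*x + b*w.re := by
    simp [hψ, Complex.add_re, Complex.mul_re, hx]
  have hψim : ψ.im = a*y + b*w.im := by
    simp [hψ, Complex.add_im, Complex.mul_im, hy]
  rcases le_or_gt (|y|) (P/2) with hyc | hyc
  · have h2 : P/2 ≤ w.re := by nlinarith [sq_nonneg w.im, sq_nonneg x, _root_.sq_abs y, abs_nonneg y]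
    have : min a b * (P/2) ≤ ψ.re := by
      rw [hψre]
      have h3 := min_le_right a b
      nlinarith [mul_pos ha hζ]
    linarith [Complex.re_le_norm ψ]
  · have hsign : 0 ≤ y * w.im := by
      nlinarith [sq_nonneg (x*y), mul_pos hζ hwre]
    have h4 : a * (P/2) ≤ |ψ.im| := by
      rw [hψim]
      rcases le_or_gt 0 y with hy0 | hy0
      · have hyP : P/2 ≤ y := by rw [_root_.abs_of_nonneg hy0] at hyc; linarith
        have hwim : 0 ≤ w.im := by
          by_contra hcon; push_neg at hcon
          nlinarith [mul_pos hwre (neg_pos.mpr hcon), mul_pos hζ (show (0:ℝ) < y by linarith)]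
        rw [_root_.abs_of_nonneg (by nlinarith)]
        nlinarith
      · have hyP : y ≤ -(P/2) := by rw [abs_of_neg hy0] at hyc; linarith
        have hwim : w.im ≤ 0 := by
          by_contra hcon; push_neg at hcon
          nlinarith [mul_pos hwre hcon, mul_pos hζ (show (0:ℝ) < -y by linarith)]
        rw [abs_of_nonpos (by nlinarith)]
        nlinarith
    have h5 : min a b * (P/2) ≤ a * (P/2) := by
      have := min_le_left a b; nlinarith
    linarith [Complex.abs_im_le_norm ψ]

lemma sqrt_ofReal_sq (s : ℝ) (hs : 0 ≤ s) :
    (((s^2 : ℝ)) : ℂ) ^ ((1:ℂ)/2) = (s : ℂ) := by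
  have h1 : ((1:ℂ)/2) = ((1/2 : ℝ):ℂ) := by norm_num
  rw [h1, ← Complex.ofReal_cpow (by positivity)]
  congr 1
  have h2 : (s:ℝ)^2 = s ^ (2:ℝ) := by
    rw [← Real.rpow_natCast s 2]; norm_num
  rw [h2, ← Real.rpow_mul hs]
  norm_num

set_option maxHeartbeats 1000000 in
lemma psi_small (P a b : ℝ) (hP : 0 < P) (ha : 0 ≤ a) (hb : 0 ≤ b)
    (hab : ¬(a = 0 ∧ b = 0)) (δ : ℝ) (hδ : 0 < δ) :
    ∃ ζ : ℂ, 0 < ζ.re ∧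
      ‖((a:ℂ)*ζ - (b:ℂ)*((ζ^2+(P:ℂ)^2) ^ ((1:ℂ)/2)))‖ < δ := by
  rcases eq_or_lt_of_le hb with hb0 | hb0
  · -- b = 0, so a > 0
    have ha0 : 0 < a := by
      rcases eq_or_lt_of_le ha with h | h
      · exact absurd ⟨h.symm, hb0.symm⟩ hab
      · exact h
    refine ⟨((δ/(2*a) : ℝ) : ℂ), by rw [Complex.ofReal_re]; positivity, ?_⟩
    rw [← hb0]
    rw [Complex.ofReal_zero, zero_mul, sub_zero, ← Complex.ofReal_mul,
      Complex.norm_real, Real.norm_eq_abs, _root_.abs_of_pos (by positivity)]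
    have h2 : a * (δ/(2*a)) = δ/2 := by field_simp
    rw [h2]; linarith
  · rcases eq_or_lt_of_le ha with ha0 | ha0
    · -- a = 0, b > 0
      set ε := min 1 (δ^2/(2*(b^2*(1+2*P)))) with hε
      have hεpos : 0 < ε := lt_min one_pos (by positivity)
      have hε1 : ε ≤ 1 := min_le_left _ _
      refine ⟨(ε:ℂ) + (P:ℂ)*I, by simpa using hεpos, ?_⟩
      set ζ : ℂ := (ε:ℂ) + (P:ℂ)*I with hζ
      have hu : ζ^2 + (P:ℂ)^2 = ((ε^2 : ℝ):ℂ) + ((2*ε*P : ℝ):ℂ)*I := by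
        rw [hζ]; push_cast; ring_nf; rw [Complex.I_sq]; ring
      set w := (ζ^2 + (P:ℂ)^2) ^ ((1:ℂ)/2) with hw
      have habsu : ‖(ζ^2 + (P:ℂ)^2)‖ ≤ ε^2 + 2*ε*P := by
        rw [hu]
        calc ‖(((ε^2 : ℝ):ℂ) + ((2*ε*P : ℝ):ℂ)*I)‖
            ≤ ‖((ε^2 : ℝ):ℂ)‖ + ‖(((2*ε*P : ℝ):ℂ)*I)‖ :=
              norm_add_le _ _
          _ = ε^2 + 2*ε*P := by
              simp [Complex.norm_real, Real.norm_eq_abs, Complex.norm_I]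
              rw [_root_.abs_of_nonneg (by positivity), _root_.abs_of_nonneg (by positivity)]
      have hwabs : ‖w‖^2 = ‖(ζ^2 + (P:ℂ)^2)‖ := by
        rw [← norm_pow, hw, sqrt_sq']
      have hψ : ‖((a:ℂ)*ζ - (b:ℂ)*w)‖ = b * ‖w‖ := by
        rw [← ha0]
        push_cast
        rw [zero_mul, zero_sub, norm_neg, norm_mul, Complex.norm_real, Real.norm_eq_abs,
          _root_.abs_of_pos hb0]
      have hfin : (‖((a:ℂ)*ζ - (b:ℂ)*w)‖)^2 < δ^2 := by
        rw [hψ, mul_pow, hwabs]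
        have h2 : ε ≤ δ^2/(2*(b^2*(1+2*P))) := min_le_right _ _
        have hεsq : ε^2 ≤ ε := by nlinarith
        have h3 : b^2 * (ε^2 + 2*ε*P) ≤ b^2 * (ε * (1+2*P)) := by nlinarith [sq_nonneg b]
        have h4 : b^2 * (ε * (1+2*P)) ≤ δ^2/2 := by
          have h5 := (le_div_iff₀ (by positivity : (0:ℝ) < 2*(b^2*(1+2*P)))).mp h2
          nlinarith
        nlinarith [mul_le_mul_of_nonneg_left habsu (by positivity : (0:ℝ) ≤ b^2)]
      exact lt_of_pow_lt_pow_left₀ 2 hδ.le hfin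
    · -- a > 0, b > 0
      rcases lt_trichotomy b a with hba | hba | hba
      · -- b < a : exact zero on the real axis
        set q := Real.sqrt (a^2 - b^2) with hqdef
        have hq2 : q^2 = a^2 - b^2 := Real.sq_sqrt (by nlinarith)
        have hqpos : 0 < q := Real.sqrt_pos.mpr (by nlinarith)
        set t := b*P/q with htdef
        set s := a*P/q with hsdef
        have htpos : 0 < t := by positivity
        have hspos : 0 < s := by positivity
        have hts : t^2 + P^2 = s^2 := by
          rw [htdef, hsdef]; field_simp; linear_combination hq2
        refine ⟨(t:ℂ), by simpa using htpos, ?_⟩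
        have hu : ((t:ℂ))^2 + (P:ℂ)^2 = ((s^2:ℝ):ℂ) := by
          rw [← Complex.ofReal_pow, ← Complex.ofReal_pow, ← Complex.ofReal_add, hts]
        rw [hu, sqrt_ofReal_sq s hspos.le, ← Complex.ofReal_mul, ← Complex.ofReal_mul,
          ← Complex.ofReal_sub, Complex.norm_real, Real.norm_eq_abs]
        have hz : a*t - b*s = 0 := by rw [htdef, hsdef]; field_simp; ring
        rw [hz]; simpa using hδ
      · -- b = a : go far out on the real axis
        set t := max 1 (2*a*P^2/δ) with htdef
        have ht1 : (1:ℝ) ≤ t := le_max_left _ _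
        have htpos : 0 < t := lt_of_lt_of_le one_pos ht1
        set s := Real.sqrt (t^2+P^2) with hsdef
        have hs2 : s^2 = t^2 + P^2 := Real.sq_sqrt (by positivity)
        have hspos : 0 < s := Real.sqrt_pos.mpr (by positivity)
        have hst : t < s := by nlinarith
        refine ⟨(t:ℂ), by simpa using htpos, ?_⟩
        have hu : ((t:ℂ))^2 + (P:ℂ)^2 = ((s^2:ℝ):ℂ) := by
          rw [← Complex.ofReal_pow, ← Complex.ofReal_pow, ← Complex.ofReal_add, hs2]
        rw [hu, sqrt_ofReal_sq s hspos.le, ← Complex.ofReal_mul, ← Complex.ofReal_mul,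
          ← Complex.ofReal_sub, Complex.norm_real, Real.norm_eq_abs, ← hba]
        rw [_root_.abs_of_neg (by nlinarith)]
        have e1 : (s-t)*(s+t) = P^2 := by linear_combination hs2
        have ht2 : 2*a*P^2/δ ≤ t := le_max_right _ _
        have ht2' : 2*a*P^2 ≤ δ*t := by
          rw [div_le_iff₀ hδ] at ht2; linarith
        -- a*(s-t) ≤ a*P^2/t ≤ δ/2 < δ
        nlinarith [mul_pos htpos hδ, mul_pos ha0 (sub_pos.mpr hst), e1,
          mul_pos (mul_pos ha0 (sub_pos.mpr hst)) htpos]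
      · -- a < b : approach the branch point region near the imaginary axis
        set q := Real.sqrt (b^2 - a^2) with hqdef
        have hq2 : q^2 = b^2 - a^2 := Real.sq_sqrt (by nlinarith)
        have hqpos : 0 < q := Real.sqrt_pos.mpr (by nlinarith)
        set c := b*P/q with hcdef
        set d := a*P/q with hddef
        have hcpos : 0 < c := by positivity
        have hdpos : 0 < d := by positivity
        have hacbd : a*c = b*d := by rw [hcdef, hddef]; field_simp
        have hcd : c^2 = P^2 + d^2 := by
          rw [hcdef, hddef]; field_simp; linear_combination (-1) * hq2
        set K := a + b*(1+2*c)/d with hK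
        have hKpos : 0 < K := by positivity
        set ε := min 1 (δ/(2*K)) with hε
        have hεpos : 0 < ε := lt_min one_pos (by positivity)
        have hε1 : ε ≤ 1 := min_le_left _ _
        refine ⟨(ε:ℂ) + (c:ℂ)*I, by simpa using hεpos, ?_⟩
        set ζ : ℂ := (ε:ℂ) + (c:ℂ)*I with hζ
        set u := ζ^2 + (P:ℂ)^2 with hu
        have huval : u = ((ε^2 - d^2 : ℝ):ℂ) + ((2*ε*c : ℝ):ℂ)*I := by
          have hcC : (c:ℂ)^2 = (P:ℂ)^2 + (d:ℂ)^2 := by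
            rw [← Complex.ofReal_pow, ← Complex.ofReal_pow, ← Complex.ofReal_pow,
              ← Complex.ofReal_add, hcd]
          rw [hu, hζ]; push_cast
          linear_combination (I^2)*hcC + ((P:ℂ)^2+(d:ℂ)^2)*Complex.I_sq
        have huim : u.im = 2*ε*c := by rw [huval]; simp [pow_two, Complex.mul_im]
        have hcond : u.im ≠ 0 ∨ 0 < u.re := Or.inl (by rw [huim]; positivity)
        obtain ⟨hwre, hre, him⟩ := sqrt_facts u hcond
        set w := u ^ ((1:ℂ)/2) with hw
        have hwim : 0 < w.im := by
          rw [huim] at him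
          by_contra hcon; push_neg at hcon
          nlinarith [mul_pos hεpos hcpos, mul_nonneg hwre.le (neg_nonneg.mpr hcon)]
        have hkey : (w - (d:ℂ)*I)*(w + (d:ℂ)*I) = ((ε^2:ℝ):ℂ) + ((2*ε*c:ℝ):ℂ)*I := by
          have h2 : w^2 = u := sqrt_sq' u
          have h3 : (w - (d:ℂ)*I)*(w + (d:ℂ)*I) = w^2 - (d:ℂ)^2*I^2 := by ring
          rw [h3, Complex.I_sq, h2, huval]; push_cast; ring
        have habs1 : ‖(w - (d:ℂ)*I)‖ * ‖(w + (d:ℂ)*I)‖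
            ≤ ε^2 + 2*ε*c := by
          rw [← norm_mul, hkey]
          calc ‖(((ε^2:ℝ):ℂ) + ((2*ε*c:ℝ):ℂ)*I)‖
              ≤ ‖((ε^2:ℝ):ℂ)‖ + ‖(((2*ε*c:ℝ):ℂ)*I)‖ :=
                norm_add_le _ _
            _ = ε^2 + 2*ε*c := by
                simp [Complex.norm_real, Real.norm_eq_abs, Complex.norm_I]
                rw [_root_.abs_of_nonneg (by positivity), _root_.abs_of_nonneg (by positivity)]
        have habs2 : d ≤ ‖(w + (d:ℂ)*I)‖ := by
          have him2 : (w + (d:ℂ)*I).im = w.im + d := by simp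
          calc d ≤ w.im + d := by linarith
            _ ≤ |(w + (d:ℂ)*I).im| := by rw [him2]; exact le_abs_self _
            _ ≤ ‖(w + (d:ℂ)*I)‖ := Complex.abs_im_le_norm _
        have habs3 : ‖(w - (d:ℂ)*I)‖ ≤ (ε^2 + 2*ε*c)/d := by
          rw [le_div_iff₀ hdpos]
          calc ‖(w - (d:ℂ)*I)‖ * d
              ≤ ‖(w - (d:ℂ)*I)‖ * ‖(w + (d:ℂ)*I)‖ := by
                apply mul_le_mul_of_nonneg_left habs2 (norm_nonneg _)
            _ ≤ ε^2 + 2*ε*c := habs1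
        have hψeq : (a:ℂ)*ζ - (b:ℂ)*w = ((a*ε:ℝ):ℂ) - (b:ℂ)*(w - (d:ℂ)*I) := by
          have hC : (a:ℂ)*(c:ℂ) = (b:ℂ)*(d:ℂ) := by
            rw [← Complex.ofReal_mul, ← Complex.ofReal_mul, hacbd]
          rw [hζ]; push_cast
          linear_combination I * hC
        have hfinal : ‖((a:ℂ)*ζ - (b:ℂ)*w)‖ ≤ a*ε + b*((ε^2+2*ε*c)/d) := by
          rw [hψeq]
          calc ‖(((a*ε:ℝ):ℂ) - (b:ℂ)*(w - (d:ℂ)*I))‖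
              ≤ ‖((a*ε:ℝ):ℂ)‖ + ‖((b:ℂ)*(w - (d:ℂ)*I))‖ := by
                have := norm_add_le (((a*ε:ℝ):ℂ)) (-((b:ℂ)*(w - (d:ℂ)*I)))
                rw [norm_neg] at this
                simpa [sub_eq_add_neg] using this
            _ ≤ a*ε + b*((ε^2+2*ε*c)/d) := by
                rw [Complex.norm_real, Real.norm_eq_abs, norm_mul, Complex.norm_real, Real.norm_eq_abs,
                  _root_.abs_of_nonneg (by positivity), _root_.abs_of_nonneg hb0.le]
                have := mul_le_mul_of_nonneg_left habs3 hb0.le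
                linarith
        have hb1 : a*ε + b*((ε^2+2*ε*c)/d) ≤ ε*K := by
          have hε2 : ε^2 ≤ ε := by nlinarith
          have h9 : (ε^2+2*ε*c)/d ≤ (ε*(1+2*c))/d := by
            gcongr
            nlinarith
          have h10 : b*((ε*(1+2*c))/d) = ε*(b*(1+2*c)/d) := by ring
          have h11 := mul_le_mul_of_nonneg_left h9 hb0.le
          rw [hK]; nlinarith
        have hεK : ε*K ≤ δ/2 := by
          have h8 : ε ≤ δ/(2*K) := min_le_right _ _
          calc ε*K ≤ (δ/(2*K))*K := mul_le_mul_of_nonneg_right h8 hKpos.le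
            _ = δ/2 := by field_simp
        calc ‖((a:ℂ)*ζ - (b:ℂ)*w)‖ ≤ a*ε + b*((ε^2+2*ε*c)/d) := hfinal
          _ ≤ ε*K := hb1
          _ ≤ δ/2 := hεK
          _ < δ := by linarith

/-- For `P > 0` and `(A, B) ≠ (0, 0)`, the modulus of `ψ(ζ) = Aζ − B√(ζ² + P²)`
(principal square root) is uniformly bounded away from zero on the right half-plane
`{Re ζ > 0}` if and only if `A·B < 0`. -/
theorem psi_uniformly_bounded_away_iff
    (P A B : ℝ) (hP : 0 < P) (hAB : (A, B) ≠ (0, 0)) :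
    (∃ δ : ℝ, 0 < δ ∧ ∀ ζ : ℂ, 0 < ζ.re →
        δ ≤ ‖((A : ℂ) * ζ - (B : ℂ) * ((ζ ^ 2 + (P : ℂ) ^ 2) ^ ((1 : ℂ) / 2)))‖) ↔
      A * B < 0 := by
  constructor
  · rintro ⟨δ, hδ, h⟩
    by_contra hcon
    push_neg at hcon
    have hab' : ¬(A = 0 ∧ B = 0) := by
      rintro ⟨h1, h2⟩; exact hAB (by rw [h1, h2])
    have hsplit : (0 ≤ A ∧ 0 ≤ B) ∨ (A ≤ 0 ∧ B ≤ 0) := by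
      rcases le_or_gt 0 A with hA | hA <;> rcases le_or_gt 0 B with hB | hB
      · exact Or.inl ⟨hA, hB⟩
      · refine Or.inr ⟨?_, hB.le⟩
        by_contra hA0; push_neg at hA0
        nlinarith
      · refine Or.inr ⟨hA.le, ?_⟩
        by_contra hB0; push_neg at hB0
        nlinarith
      · exact Or.inr ⟨hA.le, hB.le⟩
    rcases hsplit with ⟨hA, hB⟩ | ⟨hA, hB⟩
    · obtain ⟨ζ, hζre, hζlt⟩ := psi_small P A B hP hA hB hab' δ hδ
      exact absurd (h ζ hζre) (not_le.mpr hζlt)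
    · have hab'' : ¬(-A = 0 ∧ -B = 0) := by
        rintro ⟨h1, h2⟩; exact hab' ⟨by linarith, by linarith⟩
      obtain ⟨ζ, hζre, hζlt⟩ :=
        psi_small P (-A) (-B) hP (by linarith) (by linarith) hab'' δ hδ
      have heq : ((-A:ℝ):ℂ)*ζ - ((-B:ℝ):ℂ)*((ζ^2+(P:ℂ)^2) ^ ((1:ℂ)/2))
          = -((A:ℂ)*ζ - (B:ℂ)*((ζ^2+(P:ℂ)^2) ^ ((1:ℂ)/2))) := by push_cast; ring
      rw [heq, norm_neg] at hζlt
      exact absurd (h ζ hζre) (not_le.mpr hζlt)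
  · intro hABneg
    rcases mul_neg_iff.mp hABneg with ⟨hA, hB⟩ | ⟨hA, hB⟩
    · refine ⟨min A (-B) * (P/2), mul_pos (lt_min hA (by linarith)) (by positivity), ?_⟩
      intro ζ hζ
      have hlow := psi_lower P A (-B) hP hA (by linarith) ζ hζ
      have heq : (A:ℂ)*ζ + ((-B:ℝ):ℂ)*((ζ^2+(P:ℂ)^2) ^ ((1:ℂ)/2))
          = (A:ℂ)*ζ - (B:ℂ)*((ζ^2+(P:ℂ)^2) ^ ((1:ℂ)/2)) := by push_cast; ring
      rwa [heq] at hlow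
    · refine ⟨min (-A) B * (P/2), mul_pos (lt_min (by linarith) hB) (by positivity), ?_⟩
      intro ζ hζ
      have hlow := psi_lower P (-A) B hP (by linarith) hB ζ hζ
      have heq : ((-A:ℝ):ℂ)*ζ + (B:ℂ)*((ζ^2+(P:ℂ)^2) ^ ((1:ℂ)/2))
          = -((A:ℂ)*ζ - (B:ℂ)*((ζ^2+(P:ℂ)^2) ^ ((1:ℂ)/2))) := by push_cast; ring
      rw [heq, norm_neg] at hlow
      exact hlow
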